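/- Let p : A^m × A^m → ℝ≥0 be a weight function on pairs of m-tuples over a finite set A of size n, and for each i ∈ A^m set l_i = ∑_{j ≠ i} p(i,j), r_i = ∑_{j ≠ i} p(j,i), and c_i = p(i,i). If l_i = r_i for all i ∈ A^m, then the three families (2l_i + c_i)_i, (2r_i + c_i)_i, (l_i + r_i + c_i)_i coincide pointwise; conversely, if the three multisets {{2l_i + c_i}}, {{2r_i + c_i}}, {{l_i + r_i + c_i}} are pairwise equal, then l_i = r_i for all i. -/

import Mathlib

/-!
Write `f i = 2 l_i + c_i` and `g i = 2 r_i + c_i`, so that `l_i + r_i + c_i` is their mean.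
Equal multisets have equal sums of squares, and `(f - g)² = 2 f² + 2 g² - (f + g)²`,
so `∑ (f i - g i)² = 0`, whence `f = g`.
-/

open Finset

theorem Finset.sum_comp_eq_of_map_val_eq {ι α M : Type*} [AddCommMonoid M] (s : Finset ι)
    {f g : ι → α} (h : s.val.map f = s.val.map g) (φ : α → M) :
    ∑ i ∈ s, φ (f i) = ∑ i ∈ s, φ (g i) := by
  simpa only [Multiset.map_map, Function.comp_def, Finset.sum_map_val] using
    congrArg (fun t => (t.map φ).sum) h

theorem Finset.eq_of_map_val_eq_of_map_val_eq_mean {ι : Type*} (s : Finset ι)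
    {f g h : ι → ℝ} (hfg : s.val.map f = s.val.map g) (hfh : s.val.map f = s.val.map h)
    (hmean : ∀ i ∈ s, 2 * h i = f i + g i) :
    ∀ i ∈ s, f i = g i := by
  have hf_g := s.sum_comp_eq_of_map_val_eq hfg (· ^ 2)
  have hf_h := s.sum_comp_eq_of_map_val_eq hfh (· ^ 2)
  have hsq : ∑ i ∈ s, (f i - g i) ^ 2 = 0 := by
    calc ∑ i ∈ s, (f i - g i) ^ 2
        = ∑ i ∈ s, (2 * f i ^ 2 + 2 * g i ^ 2 - 4 * h i ^ 2) :=
          sum_congr rfl fun i hi => by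
            rw [show 4 * h i ^ 2 = (2 * h i) ^ 2 by ring, hmean i hi]
            ring
      _ = 2 * ∑ i ∈ s, f i ^ 2 + 2 * ∑ i ∈ s, g i ^ 2 - 4 * ∑ i ∈ s, h i ^ 2 := by
          rw [sum_sub_distrib, sum_add_distrib, ← mul_sum, ← mul_sum, ← mul_sum]
      _ = 0 := by linarith
  intro i hi
  have := (sum_eq_zero_iff_of_nonneg fun j _ => sq_nonneg (f j - g j)).mp hsq i hi
  exact sub_eq_zero.mp (pow_eq_zero_iff two_ne_zero |>.mp this)

theorem marginal_identity_definable_from_equivalence_general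
    {A : Type*} [Fintype A] [DecidableEq A] (m : ℕ)
    (p : (Fin m → A) × (Fin m → A) → ℝ) :
    let l : (Fin m → A) → ℝ := fun i => ∑ j ∈ Finset.univ \ {i}, p (i, j)
    let r : (Fin m → A) → ℝ := fun i => ∑ j ∈ Finset.univ \ {i}, p (j, i)
    let c : (Fin m → A) → ℝ := fun i => p (i, i)
    ((∀ i, l i = r i) →
      (∀ i, 2 * l i + c i = 2 * r i + c i) ∧
      (∀ i, 2 * r i + c i = l i + r i + c i)) ∧
    (((Finset.univ.val.map (fun i => 2 * l i + c i)) =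
        (Finset.univ.val.map (fun i => 2 * r i + c i)) ∧
      (Finset.univ.val.map (fun i => 2 * l i + c i)) =
        (Finset.univ.val.map (fun i => l i + r i + c i)) ∧
      (Finset.univ.val.map (fun i => 2 * r i + c i)) =
        (Finset.univ.val.map (fun i => l i + r i + c i))) →
      ∀ i, l i = r i) := by
  intro l r c
  refine ⟨fun hlr => ⟨fun i => by rw [hlr i], fun i => by rw [hlr i]; ring⟩, ?_⟩
  rintro ⟨hlr, hlm, -⟩ i
  have := univ.eq_of_map_val_eq_of_map_val_eq_mean hlr hlm (fun j _ => by ring) i (mem_univ i)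
  linarith

theorem marginal_identity_definable_from_equivalence
    {A : Type*} [Fintype A] [DecidableEq A] (m : ℕ) (hm : 1 ≤ m)
    (hA : 1 ≤ Fintype.card A)
    (p : (Fin m → A) × (Fin m → A) → ℝ) (hp : ∀ x, 0 ≤ p x) :
    let l : (Fin m → A) → ℝ := fun i => ∑ j ∈ Finset.univ \ {i}, p (i, j)
    let r : (Fin m → A) → ℝ := fun i => ∑ j ∈ Finset.univ \ {i}, p (j, i)
    let c : (Fin m → A) → ℝ := fun i => p (i, i)
    ((∀ i, l i = r i) →
      (∀ i, 2 * l i + c i = 2 * r i + c i) ∧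
      (∀ i, 2 * r i + c i = l i + r i + c i)) ∧
    (((Finset.univ.val.map (fun i => 2 * l i + c i)) =
        (Finset.univ.val.map (fun i => 2 * r i + c i)) ∧
      (Finset.univ.val.map (fun i => 2 * l i + c i)) =
        (Finset.univ.val.map (fun i => l i + r i + c i)) ∧
      (Finset.univ.val.map (fun i => 2 * r i + c i)) =
        (Finset.univ.val.map (fun i => l i + r i + c i))) →
      ∀ i, l i = r i) :=
  marginal_identity_definable_from_equivalence_general m p
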